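/- For every integer n > 0, e_3Q(n) = (1/6) ( n^3 * Q(n) - Σ_{k=1}^{n} ( 3n * σ_{2,odd}(k) - 2 * σ_{3,odd}(k) ) * Q(n-k) ). -/

import Mathlib

open Finset

/-- The finset of partitions of `n` into odd parts. -/
def oddPartitions (n : ℕ) : Finset (Nat.Partition n) :=
  Finset.univ.filter fun π => ∀ i ∈ π.parts, Odd i

/-- `Q(n)`, the number of partitions of `n` into odd parts. -/
def Qodd (n : ℕ) : ℕ := (oddPartitions n).card

/-- `e_j Q(n)`, the sum of the `j`-th elementary symmetric polynomial evaluated at the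
parts over all partitions of `n` into odd parts. -/
def ejQ (j n : ℕ) : ℕ := ∑ π ∈ oddPartitions n, π.parts.esymm j

/-- `σ_{j,odd}(n)`, the sum of `d^j` over the odd divisors `d` of `n`. -/
def sigmaOdd (j n : ℕ) : ℕ := ∑ d ∈ n.divisors.filter Odd, d ^ j

/-!
Newton's identity `6 e₃ = p₁³ - 3 p₁ p₂ + 2 p₃` holds for the parts of every partition, and
`p₁ = n`. Summed over the odd partitions of `n`, each power sum `∑_λ p_j(λ)` is a convolution
`∑_k σ_{j,odd}(k) Q(n - k)`: the multiplicity of an odd part `d` is `∑_{t ≥ 1} [t ≤ mult]`, and the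
odd partitions of `n` with at least `t` parts equal to `d` correspond to the odd partitions of
`n - t d` by removing those `t` parts; then `k = t d` runs over the multiples of `d`.
-/

namespace Multiset

variable {R : Type*} [CommSemiring R]

theorem esymm_cons_succ (a : R) (s : Multiset R) (k : ℕ) :
    (a ::ₘ s).esymm (k + 1) = s.esymm (k + 1) + a * s.esymm k := by
  simp only [esymm, powersetCard_cons, map_add, sum_add, map_map, Function.comp_def, prod_cons,
    sum_map_mul_left]

theorem esymm_one_eq_sum (s : Multiset R) : s.esymm 1 = s.sum := by
  simp [esymm, powersetCard_one, map_map]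

theorem two_mul_esymm_two_add_sum_sq (s : Multiset R) :
    2 * s.esymm 2 + (s.map (· ^ 2)).sum = s.sum ^ 2 := by
  induction s using Multiset.induction with
  | empty => simp [esymm, powersetCard_zero_right]
  | cons a s ih =>
    rw [esymm_cons_succ, esymm_one_eq_sum, map_cons, sum_cons, sum_cons]
    calc _ = (2 * s.esymm 2 + (s.map (· ^ 2)).sum) + 2 * a * s.sum + a ^ 2 := by ring
      _ = _ := by rw [ih]; ring

theorem six_mul_esymm_three_add (s : Multiset R) :
    6 * s.esymm 3 + 3 * s.sum * (s.map (· ^ 2)).sum = s.sum ^ 3 + 2 * (s.map (· ^ 3)).sum := by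
  induction s using Multiset.induction with
  | empty => simp [esymm, powersetCard_zero_right]
  | cons a s ih =>
    simp only [esymm_cons_succ, map_cons, sum_cons]
    calc _ = (6 * s.esymm 3 + 3 * s.sum * (s.map (· ^ 2)).sum)
          + 3 * a * (2 * s.esymm 2 + (s.map (· ^ 2)).sum) + 3 * a ^ 2 * s.sum + 3 * a ^ 3 := by
          ring
      _ = _ := by rw [ih, two_mul_esymm_two_add_sum_sq]; ring

end Multiset

theorem mem_oddPartitions {n : ℕ} {π : n.Partition} :
    π ∈ oddPartitions n ↔ ∀ i ∈ π.parts, Odd i := by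
  simp [oddPartitions]

theorem Nat.Partition.count_mul_le {n : ℕ} (π : n.Partition) (d : ℕ) :
    π.parts.count d * d ≤ n := by
  obtain ⟨u, hu⟩ := Multiset.le_iff_exists_add.mp
    (Multiset.le_count_iff_replicate_le.mp (le_refl (π.parts.count d)))
  have := congrArg Multiset.sum hu
  rw [Multiset.sum_add, Multiset.sum_replicate, smul_eq_mul, π.parts_sum] at this
  omega

theorem card_filter_le_count_oddPartitions {n d t : ℕ} (hd : Odd d) (h : t * d ≤ n) :
    #{π ∈ oddPartitions n | t ≤ π.parts.count d} = Qodd (n - t * d) := by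
  have hsplit {π : n.Partition} (hπ : t ≤ π.parts.count d) :
      π.parts - Multiset.replicate t d + Multiset.replicate t d = π.parts :=
    tsub_add_cancel_of_le (Multiset.le_count_iff_replicate_le.mp hπ)
  have hodd_add {μ : (n - t * d).Partition} (hμ : μ ∈ oddPartitions (n - t * d)) {i : ℕ}
      (hi : i ∈ μ.parts + Multiset.replicate t d) : Odd i := by
    rcases Multiset.mem_add.1 hi with hi | hi
    · exact mem_oddPartitions.1 hμ i hi
    · exact Multiset.eq_of_mem_replicate hi ▸ hd
  refine card_bij'
    (fun π hπ => ⟨π.parts - Multiset.replicate t d,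
      fun hi => π.parts_pos (Multiset.mem_of_le tsub_le_self hi), ?_⟩)
    (fun μ hμ => ⟨μ.parts + Multiset.replicate t d, fun hi => (hodd_add hμ hi).pos, ?_⟩)
    (fun π hπ => mem_oddPartitions.2 fun i hi =>
      mem_oddPartitions.1 (mem_filter.1 hπ).1 i (Multiset.mem_of_le tsub_le_self hi))
    (fun μ hμ => mem_filter.2 ⟨mem_oddPartitions.2 fun _ => hodd_add hμ, by simp⟩)
    (fun π hπ => Nat.Partition.ext (hsplit (mem_filter.1 hπ).2))
    (fun μ _ => Nat.Partition.ext (add_tsub_cancel_right _ _))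
  · have := congrArg Multiset.sum (hsplit (mem_filter.1 hπ).2)
    rw [Multiset.sum_add, Multiset.sum_replicate, smul_eq_mul, π.parts_sum] at this
    omega
  · rw [Multiset.sum_add, Multiset.sum_replicate, smul_eq_mul, μ.parts_sum]
    omega

theorem sum_count_oddPartitions {n d : ℕ} (hd : Odd d) :
    ∑ π ∈ oddPartitions n, π.parts.count d = ∑ t ∈ Icc 1 (n / d), Qodd (n - t * d) := by
  have hcount (π : n.Partition) :
      π.parts.count d = #{t ∈ Icc 1 (n / d) | t ≤ π.parts.count d} := by
    have : π.parts.count d ≤ n / d := (Nat.le_div_iff_mul_le hd.pos).2 (π.count_mul_le d)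
    rw [show {t ∈ Icc 1 (n / d) | t ≤ π.parts.count d} = Icc 1 (π.parts.count d) by
      ext; simp only [mem_filter, mem_Icc]; omega, Nat.card_Icc, Nat.add_sub_cancel]
  calc _ = ∑ π ∈ oddPartitions n, #{t ∈ Icc 1 (n / d) | t ≤ π.parts.count d} :=
        sum_congr rfl fun π _ => hcount π
    _ = ∑ t ∈ Icc 1 (n / d), #{π ∈ oddPartitions n | t ≤ π.parts.count d} := by
        simp only [card_filter]
        exact sum_comm
    _ = _ := sum_congr rfl fun t ht => card_filter_le_count_oddPartitions hd
        ((Nat.le_div_iff_mul_le hd.pos).1 (mem_Icc.1 ht).2)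

theorem map_Icc_div_mul {n d : ℕ} (hd : 0 < d) :
    (Icc 1 (n / d)).map ⟨(· * d), mul_left_injective₀ hd.ne'⟩ = {k ∈ Icc 1 n | d ∣ k} := by
  ext k
  simp only [mem_map, mem_filter, mem_Icc, Function.Embedding.coeFn_mk, Nat.le_div_iff_mul_le hd]
  constructor
  · rintro ⟨t, ⟨ht, htn⟩, rfl⟩
    exact ⟨⟨Nat.one_le_iff_ne_zero.2 (mul_ne_zero (by omega) hd.ne'), htn⟩, dvd_mul_left d t⟩
  · rintro ⟨⟨hk, hkn⟩, t, rfl⟩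
    exact ⟨t, ⟨Nat.pos_of_mul_pos_left hk, by rwa [mul_comm]⟩, mul_comm t d⟩

theorem sum_sum_map_parts_oddPartitions {M : Type*} [AddCommMonoid M] (f : ℕ → M) (n : ℕ) :
    ∑ π ∈ oddPartitions n, (π.parts.map f).sum =
      ∑ k ∈ Icc 1 n, Qodd (n - k) • ∑ d ∈ k.divisors with Odd d, f d := by
  calc _ = ∑ π ∈ oddPartitions n, ∑ d ∈ Icc 1 n with Odd d, π.parts.count d • f d := by
        refine sum_congr rfl fun π hπ => ?_
        rw [sum_multiset_map_count]
        refine sum_subset (fun i hi => ?_) fun i _ hi => ?_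
        · rw [Multiset.mem_toFinset] at hi
          exact mem_filter.2 ⟨mem_Icc.2 ⟨π.parts_pos hi, Nat.Partition.le_of_mem_parts hi⟩,
            mem_oddPartitions.1 hπ i hi⟩
        · rw [Multiset.count_eq_zero.2 (by simpa using hi), zero_smul]
    _ = ∑ d ∈ Icc 1 n with Odd d, (∑ π ∈ oddPartitions n, π.parts.count d) • f d := by
        rw [sum_comm]
        simp only [sum_smul]
    _ = ∑ d ∈ Icc 1 n with Odd d, ∑ k ∈ Icc 1 n with d ∣ k, Qodd (n - k) • f d := by
        refine sum_congr rfl fun d hd => ?_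
        have hd := (mem_filter.1 hd).2
        rw [sum_count_oddPartitions hd, ← map_Icc_div_mul hd.pos, sum_map, sum_smul]
        rfl
    _ = ∑ k ∈ Icc 1 n, ∑ d ∈ k.divisors with Odd d, Qodd (n - k) • f d := by
        refine sum_comm' fun d k => ?_
        simp only [mem_filter, mem_Icc, Nat.mem_divisors]
        constructor
        · rintro ⟨⟨-, hd⟩, ⟨hk, hkn⟩, hdk⟩
          exact ⟨⟨⟨hdk, by omega⟩, hd⟩, hk, hkn⟩
        · rintro ⟨⟨⟨hdk, -⟩, hd⟩, hk, hkn⟩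
          exact ⟨⟨⟨Nat.pos_of_dvd_of_pos hdk hk, (Nat.le_of_dvd hk hdk).trans hkn⟩, hd⟩,
            ⟨hk, hkn⟩, hdk⟩
    _ = _ := by simp only [Finset.smul_sum]

theorem sum_powerSum_oddPartitions (j n : ℕ) :
    ∑ π ∈ oddPartitions n, (π.parts.map (· ^ j)).sum =
      ∑ k ∈ Icc 1 n, sigmaOdd j k * Qodd (n - k) := by
  simp only [sum_sum_map_parts_oddPartitions, sigmaOdd, smul_eq_mul, mul_comm]

theorem six_mul_ejQ_three (n : ℕ) :
    6 * ejQ 3 n + 3 * n * ∑ k ∈ Icc 1 n, sigmaOdd 2 k * Qodd (n - k) =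
      n ^ 3 * Qodd n + 2 * ∑ k ∈ Icc 1 n, sigmaOdd 3 k * Qodd (n - k) := by
  rw [← sum_powerSum_oddPartitions, ← sum_powerSum_oddPartitions, ejQ, Qodd, card_eq_sum_ones,
    mul_sum, mul_sum, mul_sum, mul_sum, ← sum_add_distrib, ← sum_add_distrib]
  refine sum_congr rfl fun π _ => ?_
  simpa [π.parts_sum] using π.parts.six_mul_esymm_three_add

theorem e3Q_formula_general (n : ℕ) :
    (ejQ 3 n : ℚ) =
      (1 / 6) * ((n : ℚ) ^ 3 * (Qodd n : ℚ) -
        ∑ k ∈ Finset.Icc 1 n,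
          (3 * (n : ℚ) * (sigmaOdd 2 k : ℚ) - 2 * (sigmaOdd 3 k : ℚ)) * (Qodd (n - k) : ℚ)) := by
  have h := congrArg (Nat.cast : ℕ → ℚ) (six_mul_ejQ_three n)
  push_cast at h
  simp only [sub_mul, sum_sub_distrib, mul_assoc, ← mul_sum]
  linarith

theorem e3Q_formula (n : ℕ) (hn : 0 < n) :
    (ejQ 3 n : ℚ) =
      (1 / 6) * ((n : ℚ) ^ 3 * (Qodd n : ℚ) -
        ∑ k ∈ Finset.Icc 1 n,
          (3 * (n : ℚ) * (sigmaOdd 2 k : ℚ) - 2 * (sigmaOdd 3 k : ℚ)) * (Qodd (n - k) : ℚ)) :=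
  e3Q_formula_general n
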